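/- Let T be a closed right-linear operator on a Clifford Banach module with nonempty S-resolvent set. Then for every paravector s, the operator Q_s[T] = T² - 2 s_0 T + |s|² (domain dom(T²)) is closed. -/

import Mathlib

noncomputable section

open scoped BigOperators

/-- The negative-definite quadratic form on `Fin d → ℝ`, so that the Clifford
algebra generators satisfy `eᵢ² = -1` and anticommute. -/
def negQ (d : ℕ) : QuadraticForm ℝ (Fin d → ℝ) :=
  QuadraticMap.weightedSumSquares ℝ (fun _ : Fin d => (-1 : ℝ))

/-- The real Clifford algebra ℝ_d. -/
abbrev Cl (d : ℕ) : Type := CliffordAlgebra (negQ d)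

/-- The paravector `s₀ + s₁e₁ + ⋯ + s_d e_d`. -/
def pv {d : ℕ} (s₀ : ℝ) (v : Fin d → ℝ) : Cl d :=
  algebraMap ℝ (Cl d) s₀ + CliffordAlgebra.ι (negQ d) v

/-- The Clifford conjugate `s₀ - s₁e₁ - ⋯ - s_d e_d` of a paravector. -/
def pvConj {d : ℕ} (s₀ : ℝ) (v : Fin d → ℝ) : Cl d :=
  algebraMap ℝ (Cl d) s₀ - CliffordAlgebra.ι (negQ d) v

/-- The squared modulus `s₀² + s₁² + ⋯ + s_d²` of a paravector. -/
def pvNormSq {d : ℕ} (s₀ : ℝ) (v : Fin d → ℝ) : ℝ := s₀ ^ 2 + ∑ i, v i ^ 2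

/-- Right multiplication `v ↦ v·a` on a right Clifford module `V`. -/
def rmul {d : ℕ} {V : Type*} [AddCommGroup V] [Module (Cl d)ᵐᵒᵖ V]
    (v : V) (a : Cl d) : V := MulOpposite.op a • v

/-- A right-linear operator `T : dom(T) ⊆ V → V` on a right Clifford module. -/
structure RightLinearOp (d : ℕ) (V : Type*) [AddCommGroup V]
    [Module (Cl d)ᵐᵒᵖ V] where
  dom : Set V
  toFun : V → V
  zero_mem : (0 : V) ∈ dom
  add_mem : ∀ ⦃v w : V⦄, v ∈ dom → w ∈ dom → v + w ∈ dom
  smul_mem : ∀ (a : (Cl d)ᵐᵒᵖ) ⦃v : V⦄, v ∈ dom → a • v ∈ dom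
  map_add' : ∀ ⦃v w : V⦄, v ∈ dom → w ∈ dom → toFun (v + w) = toFun v + toFun w
  map_smul' : ∀ (a : (Cl d)ᵐᵒᵖ) ⦃v : V⦄, v ∈ dom → toFun (a • v) = a • toFun v

namespace RightLinearOp

variable {d : ℕ} {V : Type*} [NormedAddCommGroup V] [NormedSpace ℝ V]
  [Module (Cl d)ᵐᵒᵖ V] [IsScalarTower ℝ (Cl d)ᵐᵒᵖ V]

/-- `T` is a closed operator: its graph is closed in `V × V`. -/
def IsClosedOp (T : RightLinearOp d V) : Prop :=
  IsClosed {p : V × V | p.1 ∈ T.dom ∧ p.2 = T.toFun p.1}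

/-- The domain of `T²`. -/
def dom2 (T : RightLinearOp d V) : Set V := {v | v ∈ T.dom ∧ T.toFun v ∈ T.dom}

/-- The operator `Q_s[T] = T² - 2s₀T + |s|²`, as a function (to be used on `dom2`);
it depends only on `s₀` and `|s|²` (denoted `nsq`). -/
def qs (T : RightLinearOp d V) (s₀ nsq : ℝ) (v : V) : V :=
  T.toFun (T.toFun v) - (2 * s₀) • T.toFun v + nsq • v

/-- `Qi` is a bounded, everywhere defined, two-sided inverse of
`Q_s[T] : dom(T²) → V`. -/
def IsQInv (T : RightLinearOp d V) (s₀ nsq : ℝ) (Qi : V →L[ℝ] V) : Prop :=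
  (∀ v : V, Qi v ∈ T.dom2) ∧
  (∀ v ∈ T.dom2, Qi (T.qs s₀ nsq v) = v) ∧
  (∀ v : V, T.qs s₀ nsq (Qi v) = v)

/-- The paravector `s = (s₀, sv)` belongs to the `S`-resolvent set of `T`,
i.e. `Q_s[T]⁻¹ ∈ B(V)`. -/
def InRhoS (T : RightLinearOp d V) (s₀ : ℝ) (sv : Fin d → ℝ) : Prop :=
  ∃ Qi : V →L[ℝ] V, T.IsQInv s₀ (pvNormSq s₀ sv) Qi

end RightLinearOp

/-!
For `q ∈ ρ_S(T)` the operator `Q_q[T]` has a bounded inverse `Q`, which commutes with `T` on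
`dom T`. Since `Q_s[T] = Q_q[T] - 2(s₀ - q₀) T + (|s|² - |q|²)`, applying `Q` shows that
`(v, w)` lies on the graph of `Q_s[T]` iff `v - Q w - (|q|² - |s|²) Q v = 2(s₀ - q₀) T (Q v)`;
the converse direction bootstraps `v ∈ dom(T²)` from this identity. As `Q` is bounded with
range in `dom T` and `T` is closed, this condition defines a closed set.
-/

namespace RightLinearOp

variable {d : ℕ} {V : Type*} [NormedAddCommGroup V] [NormedSpace ℝ V]
  [Module (Cl d)ᵐᵒᵖ V]

theorem qs_eq_qs_sub_add (T : RightLinearOp d V) (s₀ nsq q₀ nq : ℝ) (v : V) :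
    T.qs s₀ nsq v = T.qs q₀ nq v - (2 * (s₀ - q₀)) • T.toFun v + (nsq - nq) • v := by
  simp only [qs]
  module

variable {T : RightLinearOp d V} {q₀ nq : ℝ} {Q : V →L[ℝ] V}

theorem IsClosedOp.isClosed_setOf_eq_smul_toFun (hT : T.IsClosedOp)
    {X : Type*} [TopologicalSpace X] (c : ℝ) {f g : X → V} (hf : Continuous f)
    (hg : Continuous g) (hgT : ∀ x, g x ∈ T.dom) :
    IsClosed {x | f x = c • T.toFun (g x)} := by
  rcases eq_or_ne c 0 with rfl | hc
  · simpa only [zero_smul] using isClosed_eq hf continuous_const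
  · convert hT.preimage (hg.prodMk (hf.const_smul c⁻¹)) using 1
    ext x
    simp only [Set.mem_ofPred_eq, Set.mem_preimage, hgT x, true_and, Pi.smul_apply,
      inv_smul_eq_iff₀ hc]

theorem IsQInv.apply_mem_dom2 (hQ : T.IsQInv q₀ nq Q) (x : V) : Q x ∈ T.dom2 := hQ.1 x

theorem IsQInv.apply_qs (hQ : T.IsQInv q₀ nq Q) {v : V} (hv : v ∈ T.dom2) :
    Q (T.qs q₀ nq v) = v :=
  hQ.2.1 v hv

theorem IsQInv.qs_apply (hQ : T.IsQInv q₀ nq Q) (x : V) : T.qs q₀ nq (Q x) = x := hQ.2.2 x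

theorem IsQInv.toFun_toFun_apply (hQ : T.IsQInv q₀ nq Q) (x : V) :
    T.toFun (T.toFun (Q x)) = x + (2 * q₀) • T.toFun (Q x) + (-nq) • Q x := by
  have h := hQ.qs_apply x
  simp only [qs] at h
  linear_combination (norm := module) h

variable [IsScalarTower ℝ (Cl d)ᵐᵒᵖ V]

section RealLinear

variable (T)

theorem real_smul_mem (r : ℝ) {v : V} (hv : v ∈ T.dom) : r • v ∈ T.dom := by
  rw [← algebraMap_smul ((Cl d)ᵐᵒᵖ) r v]
  exact T.smul_mem _ hv

theorem toFun_real_smul (r : ℝ) {v : V} (hv : v ∈ T.dom) :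
    T.toFun (r • v) = r • T.toFun v := by
  rw [← algebraMap_smul ((Cl d)ᵐᵒᵖ) r v, T.map_smul' _ hv, algebraMap_smul]

theorem add_smul_add_smul_mem (r n : ℝ) {a b c : V}
    (ha : a ∈ T.dom) (hb : b ∈ T.dom) (hc : c ∈ T.dom) :
    a + r • b + n • c ∈ T.dom :=
  T.add_mem (T.add_mem ha (T.real_smul_mem r hb)) (T.real_smul_mem n hc)

theorem toFun_add_smul_add_smul (r n : ℝ) {a b c : V}
    (ha : a ∈ T.dom) (hb : b ∈ T.dom) (hc : c ∈ T.dom) :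
    T.toFun (a + r • b + n • c) = T.toFun a + r • T.toFun b + n • T.toFun c := by
  rw [T.map_add' (T.add_mem ha (T.real_smul_mem r hb)) (T.real_smul_mem n hc),
    T.map_add' ha (T.real_smul_mem r hb), T.toFun_real_smul r hb, T.toFun_real_smul n hc]

theorem add_smul_add_smul_mem_dom2 (r n : ℝ) {a b c : V}
    (ha : a ∈ T.dom2) (hb : b ∈ T.dom2) (hc : c ∈ T.dom2) :
    a + r • b + n • c ∈ T.dom2 :=
  ⟨T.add_smul_add_smul_mem r n ha.1 hb.1 hc.1, by
    rw [T.toFun_add_smul_add_smul r n ha.1 hb.1 hc.1]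
    exact T.add_smul_add_smul_mem r n ha.2 hb.2 hc.2⟩

theorem qs_add_smul_add_smul (s₀ nsq r n : ℝ) {a b c : V}
    (ha : a ∈ T.dom2) (hb : b ∈ T.dom2) (hc : c ∈ T.dom2) :
    T.qs s₀ nsq (a + r • b + n • c) =
      T.qs s₀ nsq a + r • T.qs s₀ nsq b + n • T.qs s₀ nsq c := by
  simp only [qs]
  rw [T.toFun_add_smul_add_smul r n ha.1 hb.1 hc.1,
    T.toFun_add_smul_add_smul r n ha.2 hb.2 hc.2]
  module

end RealLinear

theorem IsQInv.toFun_apply_mem_dom2 (hQ : T.IsQInv q₀ nq Q) {x : V} (hx : x ∈ T.dom) :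
    T.toFun (Q x) ∈ T.dom2 := by
  refine ⟨(hQ.apply_mem_dom2 x).2, ?_⟩
  rw [hQ.toFun_toFun_apply x]
  exact T.add_smul_add_smul_mem _ _ hx (hQ.apply_mem_dom2 x).2 (hQ.apply_mem_dom2 x).1

theorem IsQInv.qs_toFun_apply (hQ : T.IsQInv q₀ nq Q) {x : V} (hx : x ∈ T.dom) :
    T.qs q₀ nq (T.toFun (Q x)) = T.toFun x := by
  have h : T.toFun (T.toFun (T.toFun (Q x))) =
      T.toFun x + (2 * q₀) • T.toFun (T.toFun (Q x)) + (-nq) • T.toFun (Q x) := by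
    conv_lhs => rw [hQ.toFun_toFun_apply x]
    exact T.toFun_add_smul_add_smul _ _ hx (hQ.apply_mem_dom2 x).2 (hQ.apply_mem_dom2 x).1
  simp only [qs]
  linear_combination (norm := module) h

theorem IsQInv.apply_toFun (hQ : T.IsQInv q₀ nq Q) {x : V} (hx : x ∈ T.dom) :
    Q (T.toFun x) = T.toFun (Q x) := by
  simpa only [hQ.qs_toFun_apply hx] using hQ.apply_qs (hQ.toFun_apply_mem_dom2 hx)

theorem IsQInv.graph_qs_eq (hQ : T.IsQInv q₀ nq Q) (s₀ nsq : ℝ) :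
    {p : V × V | p.1 ∈ T.dom2 ∧ p.2 = T.qs s₀ nsq p.1} =
      {p | p.1 - Q p.2 - (nq - nsq) • Q p.1 = (2 * (s₀ - q₀)) • T.toFun (Q p.1)} := by
  ext ⟨v, w⟩
  simp only [Set.mem_ofPred_eq]
  constructor
  · rintro ⟨hv, rfl⟩
    rw [T.qs_eq_qs_sub_add s₀ nsq q₀ nq]
    simp only [map_add, map_sub, map_smul, hQ.apply_qs hv, hQ.apply_toFun hv.1]
    module
  · intro h
    have hv : v = Q w + (2 * (s₀ - q₀)) • T.toFun (Q v) + (nq - nsq) • Q v := by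
      rw [← h]
      abel
    have hv_dom : v ∈ T.dom := by
      rw [hv]
      exact T.add_smul_add_smul_mem _ _ (hQ.apply_mem_dom2 w).1 (hQ.apply_mem_dom2 v).2
        (hQ.apply_mem_dom2 v).1
    have hTQv_dom2 := hQ.toFun_apply_mem_dom2 hv_dom
    have hv_dom2 : v ∈ T.dom2 := by
      rw [hv]
      exact T.add_smul_add_smul_mem_dom2 _ _ (hQ.apply_mem_dom2 w) hTQv_dom2 (hQ.apply_mem_dom2 v)
    have hqv : T.qs q₀ nq v = w + (2 * (s₀ - q₀)) • T.toFun v + (nq - nsq) • v := by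
      conv_lhs => rw [hv]
      rw [T.qs_add_smul_add_smul _ _ _ _ (hQ.apply_mem_dom2 w) hTQv_dom2 (hQ.apply_mem_dom2 v),
        hQ.qs_apply w, hQ.qs_toFun_apply hv_dom, hQ.qs_apply v]
    refine ⟨hv_dom2, ?_⟩
    rw [T.qs_eq_qs_sub_add s₀ nsq q₀ nq, hqv]
    module

end RightLinearOp

open RightLinearOp in
theorem qs_closed_of_rhoS_nonempty {d : ℕ} {V : Type*}
    [NormedAddCommGroup V] [NormedSpace ℝ V]
    [Module (Cl d)ᵐᵒᵖ V] [IsScalarTower ℝ (Cl d)ᵐᵒᵖ V]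
    (T : RightLinearOp d V) (hT : T.IsClosedOp)
    (hρ : ∃ (q₀ : ℝ) (qv : Fin d → ℝ), T.InRhoS q₀ qv) :
    ∀ (s₀ : ℝ) (sv : Fin d → ℝ),
      IsClosed {p : V × V | p.1 ∈ T.dom2 ∧ p.2 = T.qs s₀ (pvNormSq s₀ sv) p.1} := by
  obtain ⟨q₀, qv, Q, hQ⟩ := hρ
  intro s₀ sv
  rw [hQ.graph_qs_eq]
  exact hT.isClosed_setOf_eq_smul_toFun _ (by fun_prop)
    (Q.continuous.comp continuous_fst) fun p => (hQ.apply_mem_dom2 p.1).1
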